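/- Suppose α < β are real numbers, B ≠ 0, and there exists x̄ ∈ ℝⁿ with α < h(x̄) < β. Then the SDP relaxation is exact: the infimum of f(x) over {x ∈ ℝⁿ : α ≤ h(x) ≤ β} equals the infimum of A•X + 2aᵀx + c over all pairs (x, X) with x ∈ ℝⁿ, X a real symmetric n×n matrix, X − xxᵀ positive semidefinite, and α ≤ B•X + 2bᵀx + d ≤ β, where • denotes the trace inner product of symmetric matrices; both optimal values are taken in the extended reals. -/

import Mathlib

/-!
Every point `x` with `α ≤ h(x) ≤ β` gives the feasible pair `(x, x xᵀ)` of the relaxation with the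
same value. Conversely, let `(x, X)` be feasible and write `X - x xᵀ = ∑ₖ vₖ vₖᵀ`, so that
`B • X + 2bᵀx + d = h(x) + ∑ₖ vₖᵀBvₖ` and likewise for `A`. Each rank-one term is absorbed by a
step along a line: if `vᵀBv ≠ 0`, the roots of `h(x + tv) = h(x) + vᵀBv` have product `-1`, and
for one of them `f(x + tv) ≤ f(x) + vᵀAv`; a term with `vᵀBv = 0 ≤ vᵀAv` is simply dropped.
What remains is a `B`-isotropic `p` with `pᵀAp < 0`. Then the problem is unbounded below: as
`B ≠ 0`, there are `v` with `vᵀBv ≠ 0` arbitrarily small and `vᵀAv` arbitrarily negative (along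
`tp + w` if `Bp = 0`, and along `tp + (δ/t)w` in a hyperbolic plane of `B` otherwise), and
absorbing such a `v` at the Slater point keeps `h` inside `(α, β)`.
-/

open Matrix

noncomputable def qfun {n : ℕ} (M : Matrix (Fin n) (Fin n) ℝ) (m : Fin n → ℝ) (r : ℝ)
    (x : Fin n → ℝ) : ℝ :=
  x ⬝ᵥ M *ᵥ x + 2 * (m ⬝ᵥ x) + r

lemma exists_quadratic_eq_self_and_le (R W U G : ℝ) (hR : R ≠ 0) :
    ∃ t, R * t ^ 2 + W * t = R ∧ U * t ^ 2 + G * t ≤ U := by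
  obtain ⟨t₀, ht₀⟩ := exists_quadratic_eq_zero (b := W) (c := -R) hR
    ⟨Real.sqrt (W ^ 2 + 4 * R ^ 2), by rw [Real.mul_self_sqrt (by positivity), discrim]; ring⟩
  have ht₀0 : t₀ ≠ 0 := by rintro rfl; simp_all
  -- the roots come in pairs `t₀, -1/t₀`, and `t ↦ U t² + G t - U` has opposite signs on them
  by_cases hle : U * t₀ ^ 2 + G * t₀ ≤ U
  · exact ⟨t₀, by linear_combination ht₀, hle⟩
  · refine ⟨-1 / t₀, ?_, ?_⟩
    · field_simp
      linear_combination -ht₀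
    · have hsq : 0 < t₀ ^ 2 := by positivity
      have hscale : (U * (-1 / t₀) ^ 2 + G * (-1 / t₀)) * t₀ ^ 2 = U - G * t₀ := by
        field_simp
        ring
      rw [← mul_le_mul_iff_of_pos_right hsq, hscale]
      linarith

lemma exists_one_le_quadratic_le {U : ℝ} (hU : U < 0) (C K : ℝ) :
    ∃ t ≥ 1, U * t ^ 2 + C * t ≤ K := by
  set s := (|C| + |K|) / -U
  have hs : 0 ≤ s := div_nonneg (by positivity) (by linarith)
  have hUs : U * s = -(|C| + |K|) := by
    have := hU.ne
    simp only [s]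
    field_simp
  have hz : U - |C| - |K| + C ≤ 0 := by linarith [le_abs_self C, abs_nonneg K]
  refine ⟨1 + s, by linarith, ?_⟩
  calc U * (1 + s) ^ 2 + C * (1 + s) = (1 + s) * (U - |C| - |K| + C) := by
        linear_combination (1 + s) * hUs
    _ ≤ U - |C| - |K| + C := by nlinarith [mul_nonpos_of_nonneg_of_nonpos hs hz]
    _ ≤ K := by linarith [le_abs_self C, neg_abs_le K]

section QuadraticForm

variable {ι : Type*} [Fintype ι]

lemma dotProduct_mulVec_smul_add_smul (M : Matrix ι ι ℝ) (u v : ι → ℝ) (s t : ℝ) :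
    (s • u + t • v) ⬝ᵥ M *ᵥ (s • u + t • v) =
      s ^ 2 * (u ⬝ᵥ M *ᵥ u) + s * t * (u ⬝ᵥ M *ᵥ v + v ⬝ᵥ M *ᵥ u) + t ^ 2 * (v ⬝ᵥ M *ᵥ v) := by
  simp only [mulVec_add, mulVec_smul, dotProduct_add, add_dotProduct, dotProduct_smul,
    smul_dotProduct, smul_eq_mul]
  ring

lemma Matrix.IsSymm.dotProduct_mulVec_comm {M : Matrix ι ι ℝ} (hM : M.IsSymm) (u v : ι → ℝ) :
    u ⬝ᵥ M *ᵥ v = v ⬝ᵥ M *ᵥ u := by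
  rw [dotProduct_mulVec, ← mulVec_transpose, hM.eq, dotProduct_comm]

lemma Matrix.IsSymm.exists_dotProduct_mulVec_self_ne_zero [DecidableEq ι] {M : Matrix ι ι ℝ}
    (hM : M.IsSymm) (hM0 : M ≠ 0) : ∃ w, w ⬝ᵥ M *ᵥ w ≠ 0 := by
  by_contra! h
  refine hM0 (Matrix.ext fun i j => ?_)
  have hpolar := dotProduct_mulVec_smul_add_smul M (Pi.single i 1) (Pi.single j 1) 1 1
  rw [h, h, h, hM.dotProduct_mulVec_comm (Pi.single j 1), mulVec_single_one,
    single_one_dotProduct, col_apply] at hpolar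
  rw [zero_apply]
  linarith

lemma exists_dotProduct_mulVec_self_ne_zero_abs_lt {M : Matrix ι ι ℝ} {w : ι → ℝ}
    (hw : w ⬝ᵥ M *ᵥ w ≠ 0) {ε : ℝ} (hε : 0 < ε) :
    ∃ v, v ⬝ᵥ M *ᵥ v ≠ 0 ∧ |v ⬝ᵥ M *ᵥ v| < ε := by
  set e := w ⬝ᵥ M *ᵥ w
  have he : 0 < |e| := abs_pos.mpr hw
  have hs : 0 < ε / (2 * |e|) := by positivity
  refine ⟨Real.sqrt (ε / (2 * |e|)) • w, ?_, ?_⟩ <;>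
    simp only [mulVec_smul, dotProduct_smul, smul_dotProduct, smul_eq_mul, ← mul_assoc,
      Real.mul_self_sqrt hs.le]
  · exact mul_ne_zero hs.ne' hw
  · rw [abs_mul, abs_of_pos hs, div_mul_eq_mul_div, mul_div_mul_right _ _ he.ne']
    linarith

lemma sum_mul_vecMulVec_self (M : Matrix ι ι ℝ) (x : ι → ℝ) :
    ∑ i, ∑ j, M i j * vecMulVec x x i j = x ⬝ᵥ M *ᵥ x := by
  simp only [vecMulVec_apply, dotProduct, mulVec, Finset.mul_sum]
  exact Finset.sum_congr rfl fun i _ => Finset.sum_congr rfl fun j _ => by ring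

open scoped MatrixOrder in
lemma exists_sum_mul_eq_sum_dotProduct_mulVec_of_posSemidef {Y : Matrix ι ι ℝ}
    (hY : Y.PosSemidef) :
    ∃ v : ι → ι → ℝ, ∀ M : Matrix ι ι ℝ,
      ∑ i, ∑ j, M i j * Y i j = ∑ k, v k ⬝ᵥ M *ᵥ v k := by
  classical
  obtain ⟨C, rfl⟩ := CStarAlgebra.nonneg_iff_eq_star_mul_self.mp hY.nonneg
  refine ⟨C, fun M => ?_⟩
  simp only [star_eq_conjTranspose, mul_apply, conjTranspose_apply, star_trivial, dotProduct,
    mulVec, Finset.mul_sum]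
  symm
  rw [Finset.sum_comm]
  refine Finset.sum_congr rfl fun i _ => ?_
  rw [Finset.sum_comm]
  exact Finset.sum_congr rfl fun j _ => Finset.sum_congr rfl fun k _ => by ring

variable {A B : Matrix ι ι ℝ} {p : ι → ℝ}

lemma exists_dotProduct_mulVec_self_abs_lt_and_le_of_mulVec_eq_zero [DecidableEq ι]
    (hB : B.IsSymm) (hB0 : B ≠ 0) (hBp : B *ᵥ p = 0) (hpA : p ⬝ᵥ A *ᵥ p < 0) {ε : ℝ}
    (hε : 0 < ε) (M : ℝ) :
    ∃ v, v ⬝ᵥ B *ᵥ v ≠ 0 ∧ |v ⬝ᵥ B *ᵥ v| < ε ∧ v ⬝ᵥ A *ᵥ v ≤ M := by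
  obtain ⟨w₀, hw₀⟩ := hB.exists_dotProduct_mulVec_self_ne_zero hB0
  obtain ⟨w, hw, hwε⟩ := exists_dotProduct_mulVec_self_ne_zero_abs_lt hw₀ hε
  obtain ⟨t, -, ht⟩ := exists_one_le_quadratic_le hpA (p ⬝ᵥ A *ᵥ w + w ⬝ᵥ A *ᵥ p)
    (M - w ⬝ᵥ A *ᵥ w)
  have hvB : (t • p + (1 : ℝ) • w) ⬝ᵥ B *ᵥ (t • p + (1 : ℝ) • w) = w ⬝ᵥ B *ᵥ w := by
    rw [dotProduct_mulVec_smul_add_smul, hB.dotProduct_mulVec_comm p w, hBp, dotProduct_zero,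
      dotProduct_zero]
    ring
  refine ⟨t • p + (1 : ℝ) • w, hvB ▸ hw, hvB ▸ hwε, ?_⟩
  rw [dotProduct_mulVec_smul_add_smul]
  linarith

lemma exists_dotProduct_mulVec_self_eq_zero_and_pos (hB : B.IsSymm) (hpB : p ⬝ᵥ B *ᵥ p = 0)
    (hBp : B *ᵥ p ≠ 0) : ∃ w, w ⬝ᵥ B *ᵥ w = 0 ∧ 0 < p ⬝ᵥ B *ᵥ w := by
  set q := B *ᵥ p
  have hpq : p ⬝ᵥ B *ᵥ q = q ⬝ᵥ q := hB.dotProduct_mulVec_comm p q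
  have hq : 0 < q ⬝ᵥ q := by
    simpa using (dotProduct_self_star_pos_iff (v := q)).mpr hBp
  refine ⟨(1 : ℝ) • q + (-(q ⬝ᵥ B *ᵥ q) / (2 * (q ⬝ᵥ q))) • p, ?_, ?_⟩
  · rw [dotProduct_mulVec_smul_add_smul, hpB, hB.dotProduct_mulVec_comm q p, hpq]
    field_simp
    ring
  · simp only [mulVec_add, mulVec_smul, dotProduct_add, dotProduct_smul, smul_eq_mul, hpq]
    rw [hpB]
    linarith

lemma exists_dotProduct_mulVec_self_abs_lt_and_le_of_mulVec_ne_zero (hB : B.IsSymm)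
    (hpB : p ⬝ᵥ B *ᵥ p = 0) (hBp : B *ᵥ p ≠ 0) (hpA : p ⬝ᵥ A *ᵥ p < 0) {ε : ℝ} (hε : 0 < ε)
    (M : ℝ) : ∃ v, v ⬝ᵥ B *ᵥ v ≠ 0 ∧ |v ⬝ᵥ B *ᵥ v| < ε ∧ v ⬝ᵥ A *ᵥ v ≤ M := by
  obtain ⟨w, hwB, hpw⟩ := exists_dotProduct_mulVec_self_eq_zero_and_pos hB hpB hBp
  set δ := ε / (4 * (p ⬝ᵥ B *ᵥ w))
  set e := w ⬝ᵥ A *ᵥ w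
  obtain ⟨t, ht1, ht⟩ := exists_one_le_quadratic_le hpA 0
    (M - δ * (p ⬝ᵥ A *ᵥ w + w ⬝ᵥ A *ᵥ p) - δ ^ 2 * |e|)
  have ht0 : t ≠ 0 := by positivity
  have hδ : 0 < δ := by positivity
  -- along `t p + (δ / t) w` the value of `B` stays `ε / 2` while that of `A` tends to `-∞`
  have hvB : (t • p + (δ / t) • w) ⬝ᵥ B *ᵥ (t • p + (δ / t) • w) = ε / 2 := by
    rw [dotProduct_mulVec_smul_add_smul, hpB, hwB, hB.dotProduct_mulVec_comm w p]
    simp only [δ]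
    field_simp
    ring
  have he : (δ / t) ^ 2 * e ≤ δ ^ 2 * |e| := by
    calc (δ / t) ^ 2 * e ≤ (δ / t) ^ 2 * |e| := by gcongr; exact le_abs_self e
      _ ≤ δ ^ 2 * |e| := by
        gcongr
        exact div_le_self hδ.le ht1
  refine ⟨t • p + (δ / t) • w, ?_, ?_, ?_⟩
  · rw [hvB]
    positivity
  · rw [hvB, abs_of_pos (by positivity)]
    linarith
  rw [dotProduct_mulVec_smul_add_smul, mul_div_cancel₀ δ ht0]
  linarith

lemma exists_dotProduct_mulVec_self_abs_lt_and_le [DecidableEq ι] (hB : B.IsSymm) (hB0 : B ≠ 0)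
    (hpB : p ⬝ᵥ B *ᵥ p = 0) (hpA : p ⬝ᵥ A *ᵥ p < 0) {ε : ℝ} (hε : 0 < ε) (M : ℝ) :
    ∃ v, v ⬝ᵥ B *ᵥ v ≠ 0 ∧ |v ⬝ᵥ B *ᵥ v| < ε ∧ v ⬝ᵥ A *ᵥ v ≤ M := by
  by_cases hBp : B *ᵥ p = 0
  · exact exists_dotProduct_mulVec_self_abs_lt_and_le_of_mulVec_eq_zero hB hB0 hBp hpA hε M
  · exact exists_dotProduct_mulVec_self_abs_lt_and_le_of_mulVec_ne_zero hB hpB hBp hpA hε M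

end QuadraticForm

section Qfun

variable {n : ℕ} {A B : Matrix (Fin n) (Fin n) ℝ} {a b : Fin n → ℝ} {c d : ℝ}

lemma qfun_add_smul (M : Matrix (Fin n) (Fin n) ℝ) (m : Fin n → ℝ) (r : ℝ) (x v : Fin n → ℝ)
    (t : ℝ) :
    qfun M m r (x + t • v) =
      qfun M m r x + t * (x ⬝ᵥ M *ᵥ v + v ⬝ᵥ M *ᵥ x + 2 * (m ⬝ᵥ v)) +
        t ^ 2 * (v ⬝ᵥ M *ᵥ v) := by
  have hexp := dotProduct_mulVec_smul_add_smul M x v 1 t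
  rw [one_smul] at hexp
  simp only [qfun, hexp, dotProduct_add, dotProduct_smul, smul_eq_mul]
  ring

lemma exists_qfun_eq_add_and_le (x v : Fin n → ℝ) (hv : v ⬝ᵥ B *ᵥ v ≠ 0) :
    ∃ y, qfun B b d y = qfun B b d x + v ⬝ᵥ B *ᵥ v ∧
      qfun A a c y ≤ qfun A a c x + v ⬝ᵥ A *ᵥ v := by
  obtain ⟨t, hB, hA⟩ := exists_quadratic_eq_self_and_le (v ⬝ᵥ B *ᵥ v)
    (x ⬝ᵥ B *ᵥ v + v ⬝ᵥ B *ᵥ x + 2 * (b ⬝ᵥ v)) (v ⬝ᵥ A *ᵥ v)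
    (x ⬝ᵥ A *ᵥ v + v ⬝ᵥ A *ᵥ x + 2 * (a ⬝ᵥ v)) hv
  refine ⟨x + t • v, ?_, ?_⟩ <;> rw [qfun_add_smul] <;> linarith

lemma exists_qfun_eq_add_and_le_of_nonneg
    (hAB : ∀ p, p ⬝ᵥ B *ᵥ p = 0 → 0 ≤ p ⬝ᵥ A *ᵥ p) (x v : Fin n → ℝ) :
    ∃ y, qfun B b d y = qfun B b d x + v ⬝ᵥ B *ᵥ v ∧
      qfun A a c y ≤ qfun A a c x + v ⬝ᵥ A *ᵥ v := by
  by_cases hv : v ⬝ᵥ B *ᵥ v = 0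
  · exact ⟨x, by rw [hv, add_zero], le_add_of_nonneg_right (hAB v hv)⟩
  · exact exists_qfun_eq_add_and_le x v hv

lemma exists_qfun_eq_add_sum_and_le_of_nonneg
    (hAB : ∀ p, p ⬝ᵥ B *ᵥ p = 0 → 0 ≤ p ⬝ᵥ A *ᵥ p) {κ : Type*} (s : Finset κ)
    (v : κ → Fin n → ℝ) (x : Fin n → ℝ) :
    ∃ y, qfun B b d y = qfun B b d x + ∑ k ∈ s, v k ⬝ᵥ B *ᵥ v k ∧
      qfun A a c y ≤ qfun A a c x + ∑ k ∈ s, v k ⬝ᵥ A *ᵥ v k := by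
  induction s using Finset.cons_induction with
  | empty => exact ⟨x, by simp, by simp⟩
  | cons k s hk ih =>
    obtain ⟨y, hyB, hyA⟩ := ih
    obtain ⟨z, hzB, hzA⟩ := exists_qfun_eq_add_and_le_of_nonneg (b := b) (d := d) (a := a)
      (c := c) hAB y (v k)
    refine ⟨z, ?_, ?_⟩ <;> rw [Finset.sum_cons] <;> linarith

lemma exists_qfun_mem_Icc_and_le_of_isotropic (hB : B.IsSymm) (hB0 : B ≠ 0) {α β : ℝ}
    (hSlater : ∃ xbar, α < qfun B b d xbar ∧ qfun B b d xbar < β) {p : Fin n → ℝ}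
    (hpB : p ⬝ᵥ B *ᵥ p = 0) (hpA : p ⬝ᵥ A *ᵥ p < 0) (M : ℝ) :
    ∃ y, qfun B b d y ∈ Set.Icc α β ∧ qfun A a c y ≤ M := by
  obtain ⟨xbar, hα, hβ⟩ := hSlater
  obtain ⟨v, hv, hvε, hvA⟩ := exists_dotProduct_mulVec_self_abs_lt_and_le hB hB0 hpB hpA
    (lt_min (sub_pos.mpr hα) (sub_pos.mpr hβ)) (M - qfun A a c xbar)
  obtain ⟨y, hyB, hyA⟩ := exists_qfun_eq_add_and_le (A := A) (a := a) (c := c) (b := b) (d := d)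
    xbar v hv
  have hαε := min_le_left (qfun B b d xbar - α) (β - qfun B b d xbar)
  have hβε := min_le_right (qfun B b d xbar - α) (β - qfun B b d xbar)
  rw [abs_lt] at hvε
  exact ⟨y, ⟨by linarith, by linarith⟩, by linarith⟩

lemma exists_qfun_eq_and_le_of_posSemidef (hAB : ∀ p, p ⬝ᵥ B *ᵥ p = 0 → 0 ≤ p ⬝ᵥ A *ᵥ p)
    {x : Fin n → ℝ} {X : Matrix (Fin n) (Fin n) ℝ} (hX : (X - vecMulVec x x).PosSemidef) :
    ∃ y, qfun B b d y = (∑ i, ∑ j, B i j * X i j) + 2 * (b ⬝ᵥ x) + d ∧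
      qfun A a c y ≤ (∑ i, ∑ j, A i j * X i j) + 2 * (a ⬝ᵥ x) + c := by
  obtain ⟨v, hv⟩ := exists_sum_mul_eq_sum_dotProduct_mulVec_of_posSemidef hX
  have hsplit (M : Matrix (Fin n) (Fin n) ℝ) :
      ∑ i, ∑ j, M i j * X i j = x ⬝ᵥ M *ᵥ x + ∑ k, v k ⬝ᵥ M *ᵥ v k := by
    rw [← sum_mul_vecMulVec_self M x, ← hv M]
    simp only [Matrix.sub_apply, ← Finset.sum_add_distrib, ← mul_add, add_sub_cancel]
  obtain ⟨y, hyB, hyA⟩ := exists_qfun_eq_add_sum_and_le_of_nonneg (b := b) (d := d) (a := a)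
    (c := c) hAB Finset.univ v x
  refine ⟨y, ?_, ?_⟩ <;> unfold qfun at hyB hyA ⊢ <;> rw [hsplit] <;> linarith

lemma exists_qfun_mem_Icc_and_le_of_posSemidef (hB : B.IsSymm) (hB0 : B ≠ 0) {α β : ℝ}
    (hSlater : ∃ xbar, α < qfun B b d xbar ∧ qfun B b d xbar < β) {x : Fin n → ℝ}
    {X : Matrix (Fin n) (Fin n) ℝ} (hX : (X - vecMulVec x x).PosSemidef)
    (hXB : (∑ i, ∑ j, B i j * X i j) + 2 * (b ⬝ᵥ x) + d ∈ Set.Icc α β) :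
    ∃ y, qfun B b d y ∈ Set.Icc α β ∧
      qfun A a c y ≤ (∑ i, ∑ j, A i j * X i j) + 2 * (a ⬝ᵥ x) + c := by
  by_cases hAB : ∀ p, p ⬝ᵥ B *ᵥ p = 0 → 0 ≤ p ⬝ᵥ A *ᵥ p
  · obtain ⟨y, hyB, hyA⟩ := exists_qfun_eq_and_le_of_posSemidef hAB hX
    exact ⟨y, hyB ▸ hXB, hyA⟩
  · push Not at hAB
    obtain ⟨p, hpB, hpA⟩ := hAB
    exact exists_qfun_mem_Icc_and_le_of_isotropic hB hB0 hSlater hpB hpA _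

end Qfun

theorem gtrs_sdp_exact_general (n : ℕ)
    (A B : Matrix (Fin n) (Fin n) ℝ) (hB : B.IsSymm)
    (a b : Fin n → ℝ) (c d : ℝ) (α β : ℝ)
    (hBne : B ≠ 0)
    (hSlater : ∃ xbar : Fin n → ℝ, α < qfun B b d xbar ∧ qfun B b d xbar < β) :
    (⨅ x ∈ {x : Fin n → ℝ | α ≤ qfun B b d x ∧ qfun B b d x ≤ β},
        ((qfun A a c x : ℝ) : EReal)) =
      ⨅ p ∈ {p : (Fin n → ℝ) × Matrix (Fin n) (Fin n) ℝ | p.2.IsSymm ∧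
          (p.2 - Matrix.vecMulVec p.1 p.1).PosSemidef ∧
          α ≤ (∑ i : Fin n, ∑ j : Fin n, B i j * p.2 i j) + 2 * (b ⬝ᵥ p.1) + d ∧
          (∑ i : Fin n, ∑ j : Fin n, B i j * p.2 i j) + 2 * (b ⬝ᵥ p.1) + d ≤ β},
        (((∑ i : Fin n, ∑ j : Fin n, A i j * p.2 i j) + 2 * (a ⬝ᵥ p.1) + c : ℝ) : EReal) := by
  apply le_antisymm
  · refine le_iInf₂ fun p ⟨_, hpsd, hα, hβ⟩ => ?_
    obtain ⟨y, hy, hyA⟩ := exists_qfun_mem_Icc_and_le_of_posSemidef (A := A) (a := a) (c := c)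
      hB hBne hSlater hpsd ⟨hα, hβ⟩
    exact (iInf₂_le y hy).trans (EReal.coe_le_coe hyA)
  · refine le_iInf₂ fun x ⟨hα, hβ⟩ => ?_
    refine (iInf₂_le (x, vecMulVec x x) ⟨transpose_vecMulVec x x, by simpa using PosSemidef.zero,
      by rwa [sum_mul_vecMulVec_self], by rwa [sum_mul_vecMulVec_self]⟩).trans_eq ?_
    rw [sum_mul_vecMulVec_self]
    rfl

/-- Exactness of the primal SDP relaxation for the interval bounded generalized
trust region subproblem, under `B ≠ 0` and the Slater condition. -/
theorem gtrs_sdp_exact (n : ℕ) (hn : 0 < n)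
    (A B : Matrix (Fin n) (Fin n) ℝ) (hA : A.IsSymm) (hB : B.IsSymm)
    (a b : Fin n → ℝ) (c d : ℝ) (α β : ℝ) (hαβ : α < β)
    (hBne : B ≠ 0)
    (hSlater : ∃ xbar : Fin n → ℝ, α < qfun B b d xbar ∧ qfun B b d xbar < β) :
    (⨅ x ∈ {x : Fin n → ℝ | α ≤ qfun B b d x ∧ qfun B b d x ≤ β},
        ((qfun A a c x : ℝ) : EReal)) =
      ⨅ p ∈ {p : (Fin n → ℝ) × Matrix (Fin n) (Fin n) ℝ | p.2.IsSymm ∧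
          (p.2 - Matrix.vecMulVec p.1 p.1).PosSemidef ∧
          α ≤ (∑ i : Fin n, ∑ j : Fin n, B i j * p.2 i j) + 2 * (b ⬝ᵥ p.1) + d ∧
          (∑ i : Fin n, ∑ j : Fin n, B i j * p.2 i j) + 2 * (b ⬝ᵥ p.1) + d ≤ β},
        (((∑ i : Fin n, ∑ j : Fin n, A i j * p.2 i j) + 2 * (a ⬝ᵥ p.1) + c : ℝ) : EReal) :=
  gtrs_sdp_exact_general n A B hB a b c d α β hBne hSlater
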